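/- arXiv:1706.03131 — 6 statements merged into one kernel-verified Lean document; each statement's English description precedes it below -/
import Mathlib

section
/- (Lemma 2.1) Suppose d ∈ ℝⁿ, d ≠ 0, satisfies ⟨∇f(x), d⟩ ≤ 0 and ⟨d, ∇²f(x) d⟩ = -‖d‖³. Then the smallest nonnegative integer j_k such that f(x + θ^{j_k} d) < f(x) - (η/6) θ^{3 j_k} ‖d‖³ exists and satisfies j_k ≤ [log_θ(3/(L_H+η))]_+ + 1, and moreover f(x) - f(x + θ^{j_k} d) ≥ (η/6)·min{1, 27 θ³/(L_H+η)³} · (|⟨d, ∇²f(x) d⟩|/‖d‖²)³. -/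
open scoped RealInnerProductSpace

/-- Lemma 2.1: line search along a negative-curvature direction. -/
theorem negative_curvature_linesearch
    {n : ℕ} (f : EuclideanSpace ℝ (Fin n) → ℝ)
    (gradf : EuclideanSpace ℝ (Fin n) → EuclideanSpace ℝ (Fin n))
    (hessf : EuclideanSpace ℝ (Fin n) → EuclideanSpace ℝ (Fin n) →L[ℝ] EuclideanSpace ℝ (Fin n))
    (hf : ContDiff ℝ 2 f)
    (hgrad : ∀ x, HasGradientAt f (gradf x) x)
    (hhess : ∀ x, HasFDerivAt gradf (hessf x) x)
    (L_H : ℝ) (hLH : 0 < L_H)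
    (hlip : ∀ x y, ‖hessf x - hessf y‖ ≤ L_H * ‖x - y‖)
    (θ η : ℝ) (hθ : θ ∈ Set.Ioo (0:ℝ) 1) (hη : 0 < η)
    (x d : EuclideanSpace ℝ (Fin n)) (hd0 : d ≠ 0)
    (hgd : ⟪gradf x, d⟫ ≤ 0)
    (hcurv : ⟪d, hessf x d⟫ = -‖d‖^3) :
    ∃ jk : ℕ,
      (f (x + θ^jk • d) < f x - η/6 * θ^(3*jk) * ‖d‖^3) ∧
      (∀ j : ℕ, j < jk → ¬ (f (x + θ^j • d) < f x - η/6 * θ^(3*j) * ‖d‖^3)) ∧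
      (jk : ℝ) ≤ max (Real.logb θ (3/(L_H+η))) 0 + 1 ∧
      f x - f (x + θ^jk • d) ≥
        η/6 * min 1 (27*θ^3/(L_H+η)^3) * (|⟪d, hessf x d⟫| / ‖d‖^2)^3 := by
  classical
  obtain ⟨hθ0, hθ1⟩ := hθ
  have hdn : (0:ℝ) < ‖d‖ := norm_pos_iff.mpr hd0
  have hd3 : (0:ℝ) < ‖d‖^3 := by positivity
  have hLη : (0:ℝ) < L_H + η := by linarith
  set A : ℝ := ⟪gradf x, d⟫ with hA
  set K : ℝ := L_H * ‖d‖^3 with hK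
  -- derivatives along the line
  have hc : ∀ t : ℝ, HasDerivAt (fun s : ℝ => x + s • d) d t := fun t => by
    simpa using ((hasDerivAt_id t).smul_const d).const_add x
  have hder0 : ∀ t : ℝ, HasDerivAt (fun s : ℝ => f (x + s • d)) ⟪gradf (x + t • d), d⟫ t := by
    intro t
    have h := ((hgrad (x + t • d)).hasFDerivAt).comp_hasDerivAt t (hc t)
    simp only [Function.comp_def, InnerProductSpace.toDual_apply_apply] at h
    exact h
  have hder1 : ∀ t : ℝ, HasDerivAt (fun s : ℝ => ⟪gradf (x + s • d), d⟫)
      ⟪hessf (x + t • d) d, d⟫ t := by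
    intro t
    have hu : HasDerivAt (fun s : ℝ => gradf (x + s • d)) (hessf (x + t • d) d) t :=
      (hhess (x + t • d)).comp_hasDerivAt t (hc t)
    simpa using hu.inner ℝ (hasDerivAt_const t d)
  -- Hessian curvature bound along the line
  have hcurvbd : ∀ t : ℝ, 0 ≤ t → ⟪hessf (x + t • d) d, d⟫ ≤ ⟪hessf x d, d⟫ + K * t := by
    intro t ht
    have h1 : ⟪hessf (x + t • d) d, d⟫ - ⟪hessf x d, d⟫ = ⟪(hessf (x + t • d) - hessf x) d, d⟫ := by
      simp [ContinuousLinearMap.sub_apply, inner_sub_left]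
    have h2 : ⟪(hessf (x + t • d) - hessf x) d, d⟫ ≤ ‖(hessf (x + t • d) - hessf x) d‖ * ‖d‖ :=
      real_inner_le_norm _ _
    have h3 : ‖(hessf (x + t • d) - hessf x) d‖ ≤ ‖hessf (x + t • d) - hessf x‖ * ‖d‖ :=
      (hessf (x + t • d) - hessf x).le_opNorm d
    have h4 : ‖hessf (x + t • d) - hessf x‖ ≤ L_H * ‖(x + t • d) - x‖ := hlip _ _
    have h5 : ‖(x + t • d) - x‖ = t * ‖d‖ := by
      simp [norm_smul, abs_of_nonneg ht]
    have hfin : ⟪(hessf (x + t • d) - hessf x) d, d⟫ ≤ K * t := by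
      calc ⟪(hessf (x + t • d) - hessf x) d, d⟫
          ≤ ‖(hessf (x + t • d) - hessf x) d‖ * ‖d‖ := h2
        _ ≤ (‖hessf (x + t • d) - hessf x‖ * ‖d‖) * ‖d‖ :=
            mul_le_mul_of_nonneg_right h3 (norm_nonneg d)
        _ ≤ ((L_H * (t * ‖d‖)) * ‖d‖) * ‖d‖ := by
            rw [h5] at h4
            exact mul_le_mul_of_nonneg_right
              (mul_le_mul_of_nonneg_right h4 (norm_nonneg d)) (norm_nonneg d)
        _ = K * t := by rw [hK]; ring
    linarith
  -- the first-order auxiliary function h1 is ≤ 0 on [0, ∞)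
  have hsymm : ⟪hessf x d, d⟫ = ⟪d, hessf x d⟫ := real_inner_comm _ _
  set B : ℝ := ⟪d, hessf x d⟫ with hB
  set h1 : ℝ → ℝ := fun t => ⟪gradf (x + t • d), d⟫ - (A + t * B + K * t^2/2) with hh1
  have hh1der : ∀ t : ℝ, HasDerivAt h1 (⟪hessf (x + t • d) d, d⟫ - (B + K * t)) t := by
    intro t
    have hpow2 : HasDerivAt (fun s : ℝ => s^2) (2*t) t := by simpa using hasDerivAt_pow 2 t
    have hp : HasDerivAt (fun t : ℝ => A + t * B + K * t^2/2) (B + K * t) t := by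
      have h := (((hasDerivAt_const t A).add ((hasDerivAt_id t).mul_const B)).add
          ((hpow2.const_mul K).div_const 2))
      exact h.congr_deriv (by ring)
    exact (hder1 t).sub hp
  have hh1le : ∀ t : ℝ, 0 ≤ t → h1 t ≤ 0 := by
    intro t ht
    have hanti : AntitoneOn h1 (Set.Ici 0) := by
      apply antitoneOn_of_deriv_nonpos (convex_Ici 0)
      · exact fun s _ => ((hh1der s).continuousAt).continuousWithinAt
      · exact fun s _ => ((hh1der s).differentiableAt).differentiableWithinAt
      · intro s hs
        rw [(hh1der s).deriv]
        rw [interior_Ici] at hs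
        have := hcurvbd s (le_of_lt hs)
        rw [hsymm] at this
        linarith
    have h10 : h1 0 = 0 := by simp [hh1, hA]
    have := hanti (Set.self_mem_Ici) (Set.mem_Ici.mpr ht) ht
    linarith [this]
  -- the zeroth-order auxiliary function
  set h0 : ℝ → ℝ := fun t => f (x + t • d) - (f x + t * A + t^2/2 * B + K * t^3/6) with hh0
  have hh0der : ∀ t : ℝ, HasDerivAt h0 (h1 t) t := by
    intro t
    have hp : HasDerivAt (fun t : ℝ => f x + t * A + t^2/2 * B + K * t^3/6)
        (A + t * B + K * t^2/2) t := by
      have hpow2 : HasDerivAt (fun s : ℝ => s^2) (2*t) t := by simpa using hasDerivAt_pow 2 t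
      have hpow3 : HasDerivAt (fun s : ℝ => s^3) (3*t^2) t := by simpa using hasDerivAt_pow 3 t
      have h := ((((hasDerivAt_const t (f x)).add ((hasDerivAt_id t).mul_const A)).add
          ((hpow2.div_const 2).mul_const B)).add ((hpow3.const_mul K).div_const 6))
      exact h.congr_deriv (by ring)
    exact (hder0 t).sub hp
  have key : ∀ t : ℝ, 0 ≤ t →
      f (x + t • d) ≤ f x + t * A + t^2/2 * B + K * t^3/6 := by
    intro t ht
    have hanti : AntitoneOn h0 (Set.Ici 0) := by
      apply antitoneOn_of_deriv_nonpos (convex_Ici 0)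
      · exact fun s _ => ((hh0der s).continuousAt).continuousWithinAt
      · exact fun s _ => ((hh0der s).differentiableAt).differentiableWithinAt
      · intro s hs
        rw [(hh0der s).deriv]
        rw [interior_Ici] at hs
        exact hh1le s (le_of_lt hs)
    have h00 : h0 0 = 0 := by simp [hh0]
    have := hanti (Set.self_mem_Ici) (Set.mem_Ici.mpr ht) ht
    simp only [hh0] at this h00
    linarith
  -- acceptance criterion
  have accept : ∀ t : ℝ, 0 < t → t < 3/(L_H+η) →
      f (x + t • d) < f x - η/6 * t^3 * ‖d‖^3 := by
    intro t ht htb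
    have hk := key t (le_of_lt ht)
    rw [hcurv] at hk
    have htA : t * A ≤ 0 := mul_nonpos_of_nonneg_of_nonpos (le_of_lt ht) hgd
    have ht3 : t * (L_H + η) < 3 := (lt_div_iff₀ hLη).mp htb
    have hmain : K * t^3/6 + η/6 * t^3 * ‖d‖^3 < t^2/2 * ‖d‖^3 := by
      rw [hK]
      nlinarith [mul_pos (mul_pos ht ht) hd3]
    linarith
  -- existence of an accepted step
  have hex : ∃ j : ℕ, f (x + θ^j • d) < f x - η/6 * θ^(3*j) * ‖d‖^3 := by
    obtain ⟨j, hj⟩ := exists_pow_lt_of_lt_one (by positivity : (0:ℝ) < 3/(L_H+η)) hθ1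
    refine ⟨j, ?_⟩
    have := accept (θ^j) (by positivity) hj
    calc f (x + θ^j • d) < f x - η/6 * (θ^j)^3 * ‖d‖^3 := this
    _ = f x - η/6 * θ^(3*j) * ‖d‖^3 := by rw [← pow_mul, mul_comm 3 j, pow_mul]
  set jk := Nat.find hex with hjk
  refine ⟨jk, Nat.find_spec hex, fun j hj => Nat.find_min hex hj, ?_, ?_⟩
  · -- bound on jk
    rcases Nat.eq_zero_or_pos jk with h | h
    · rw [h]
      simp
      positivity
    · obtain ⟨m, hm⟩ : ∃ m, jk = m + 1 := ⟨jk - 1, (Nat.succ_pred_eq_of_pos h).symm⟩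
      have hmnot := Nat.find_min hex (m := m) (by omega)
      have hge : 3/(L_H+η) ≤ θ^m := by
        by_contra hcon
        push_neg at hcon
        apply hmnot
        have := accept (θ^m) (by positivity) hcon
        calc f (x + θ^m • d) < f x - η/6 * (θ^m)^3 * ‖d‖^3 := this
        _ = f x - η/6 * θ^(3*m) * ‖d‖^3 := by rw [← pow_mul, mul_comm 3 m, pow_mul]
      -- m ≤ logb θ (3/(L_H+η))
      have hlogθ : Real.log θ < 0 := Real.log_neg hθ0 hθ1
      have hlog : Real.log (3/(L_H+η)) ≤ Real.log (θ^m) :=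
        Real.log_le_log (by positivity) hge
      rw [Real.log_pow] at hlog
      have hmle : (m:ℝ) ≤ Real.logb θ (3/(L_H+η)) := by
        rw [Real.logb, le_div_iff_of_neg hlogθ]
        exact hlog
      have : (m:ℝ) ≤ max (Real.logb θ (3/(L_H+η))) 0 := le_max_of_le_left hmle
      rw [hm]
      push_cast
      linarith
  · -- decrease bound
    have hspec := Nat.find_spec hex
    rw [← hjk] at hspec
    have hnormval : |⟪d, hessf x d⟫| / ‖d‖^2 = ‖d‖ := by
      rw [← hB, hcurv, abs_neg, abs_of_nonneg (by positivity : (0:ℝ) ≤ ‖d‖^3),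
        div_eq_iff (by positivity : (‖d‖:ℝ)^2 ≠ 0)]
      ring
    rw [hnormval]
    have hmin : min 1 (27*θ^3/(L_H+η)^3) ≤ θ^(3*jk) := by
      rcases Nat.eq_zero_or_pos jk with h | h
      · rw [h]; simpa using min_le_left _ _
      · obtain ⟨m, hm⟩ : ∃ m, jk = m + 1 := ⟨jk - 1, (Nat.succ_pred_eq_of_pos h).symm⟩
        have hmnot := Nat.find_min hex (m := m) (by omega)
        have hge : 3/(L_H+η) ≤ θ^m := by
          by_contra hcon
          push_neg at hcon
          apply hmnot
          have := accept (θ^m) (by positivity) hcon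
          calc f (x + θ^m • d) < f x - η/6 * (θ^m)^3 * ‖d‖^3 := this
          _ = f x - η/6 * θ^(3*m) * ‖d‖^3 := by rw [← pow_mul, mul_comm 3 m, pow_mul]
        have hstep : 3*θ/(L_H+η) ≤ θ^jk := by
          rw [hm, pow_succ]
          have := mul_le_mul_of_nonneg_right hge (le_of_lt hθ0)
          calc 3*θ/(L_H+η) = 3/(L_H+η) * θ := by ring
          _ ≤ θ^m * θ := this
        have hpos : (0:ℝ) ≤ 3*θ/(L_H+η) := by positivity
        have hcube : (3*θ/(L_H+η))^3 ≤ (θ^jk)^3 := pow_le_pow_left₀ hpos hstep 3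
        have heq : (3*θ/(L_H+η))^3 = 27*θ^3/(L_H+η)^3 := by
          field_simp; ring
        calc min 1 (27*θ^3/(L_H+η)^3) ≤ 27*θ^3/(L_H+η)^3 := min_le_right _ _
        _ = (3*θ/(L_H+η))^3 := heq.symm
        _ ≤ (θ^jk)^3 := hcube
        _ = θ^(3*jk) := by rw [← pow_mul, mul_comm]
    have hmono : η/6 * min 1 (27*θ^3/(L_H+η)^3) * ‖d‖^3 ≤ η/6 * θ^(3*jk) * ‖d‖^3 := by
      have := mul_le_mul_of_nonneg_right
        (mul_le_mul_of_nonneg_left hmin (by positivity : (0:ℝ) ≤ η/6)) (le_of_lt hd3)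
      linarith
    linarith
end

section
/- (Lemma 2.2) Let g = ∇f(x) with ‖g‖ > ε_g, suppose |⟨g, ∇²f(x) g⟩|/‖g‖² ≤ ε_H, and set d = -g/‖g‖^{1/2}, where ε_g, ε_H ∈ (0,1). Then the smallest nonnegative integer j_k such that f(x + θ^{j_k} d) < f(x) - (η/6) θ^{3 j_k} ‖d‖³ exists and satisfies j_k ≤ [log_θ( min{5/3, (L_H+η)^{-1/2}} · min{ε_g^{1/2} ε_H^{-1}, 1} )]_+ + 1, and moreover f(x) - f(x + θ^{j_k} d) ≥ (η/6)·min{1, θ³/(L_H+η)^{3/2}, 125 θ³/27} · min{ε_g³ ε_H^{-3}, ε_g^{3/2}}. -/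
open scoped RealInnerProductSpace

/-!
Along `d = -g / ‖g‖^{1/2}` one has `⟪g, d⟫ = -‖d‖³` and, by the curvature assumption,
`⟪∇²f(x) d, d⟫ ≤ ε_H ‖d‖²`. The cubic upper model given by the Lipschitz Hessian then shows that
every step `α ≤ ᾱ = min {5/3, (L_H + η)^{-1/2}} · min {ε_g^{1/2} / ε_H, 1}` is accepted. So
backtracking stops no later than the first `j` with `θ^j ≤ ᾱ`, which gives the logarithmic bound
on `j_k`, and the accepted step satisfies `θ^{j_k} ≥ min {1, θ ᾱ}`; together with
`‖d‖ ≥ ε_g^{1/2}` this gives the decrease bound.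
-/

lemma Odd.pow_min {R : Type*} [Semiring R] [LinearOrder R] [IsStrictOrderedRing R]
    [ExistsAddOfLE R] {n : ℕ} (hn : Odd n) (a b : R) : min a b ^ n = min (a ^ n) (b ^ n) :=
  hn.strictMono_pow.monotone.map_min

lemma sqrt_pow_three_eq_rpow {x : ℝ} (hx : 0 ≤ x) : √x ^ 3 = x ^ ((3 : ℝ) / 2) := by
  rw [Real.rpow_div_two_eq_sqrt _ hx, ← Real.rpow_natCast]; norm_num

lemma le_of_hasDerivAt_le_of_nonneg {u v u' v' : ℝ → ℝ} (hu : ∀ s, HasDerivAt u (u' s) s)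
    (hv : ∀ s, HasDerivAt v (v' s) s) (h0 : u 0 ≤ v 0) (h' : ∀ s, 0 ≤ s → u' s ≤ v' s)
    {t : ℝ} (ht : 0 ≤ t) : u t ≤ v t :=
  image_le_of_deriv_right_le_deriv_boundary (fun s _ => (hu s).continuousAt.continuousWithinAt)
    (fun s _ => (hu s).hasDerivWithinAt) h0 (fun s _ => (hv s).continuousAt.continuousWithinAt)
    (fun s _ => (hv s).hasDerivWithinAt) (fun s hs => h' s hs.1) ⟨ht, le_rfl⟩

theorem taylor_cubic_upper_bound {φ φ' φ'' : ℝ → ℝ} {L : ℝ}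
    (h1 : ∀ t, HasDerivAt φ (φ' t) t) (h2 : ∀ t, HasDerivAt φ' (φ'' t) t)
    (hlip : ∀ t, 0 ≤ t → φ'' t ≤ φ'' 0 + L * t) {t : ℝ} (ht : 0 ≤ t) :
    φ t ≤ φ 0 + φ' 0 * t + φ'' 0 / 2 * t ^ 2 + L / 6 * t ^ 3 := by
  have hquad : ∀ s, HasDerivAt (fun s => φ' 0 + φ'' 0 * s + L / 2 * s ^ 2)
      (φ'' 0 + L * s) s := fun s => by
    refine ((((hasDerivAt_id' s).const_mul (φ'' 0)).const_add (φ' 0)).fun_add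
      ((hasDerivAt_pow 2 s).const_mul (L / 2))).congr_deriv ?_
    norm_num; ring
  have hcubic : ∀ s, HasDerivAt (fun s => φ 0 + φ' 0 * s + φ'' 0 / 2 * s ^ 2 + L / 6 * s ^ 3)
      (φ' 0 + φ'' 0 * s + L / 2 * s ^ 2) s := fun s => by
    refine (((((hasDerivAt_id' s).const_mul (φ' 0)).const_add (φ 0)).fun_add
      ((hasDerivAt_pow 2 s).const_mul (φ'' 0 / 2))).fun_add
      ((hasDerivAt_pow 3 s).const_mul (L / 6))).congr_deriv ?_
    norm_num; ring
  have hφ' : ∀ s, 0 ≤ s → φ' s ≤ φ' 0 + φ'' 0 * s + L / 2 * s ^ 2 := fun s hs =>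
    le_of_hasDerivAt_le_of_nonneg h2 hquad (by simp) hlip hs
  exact le_of_hasDerivAt_le_of_nonneg h1 hcubic (by simp) hφ' ht

section InnerProductSpace

variable {E : Type*} [NormedAddCommGroup E] [InnerProductSpace ℝ E]

lemma inner_apply_sub_inner_apply_le (A B : E →L[ℝ] E) (p : E) :
    ⟪A p, p⟫ - ⟪B p, p⟫ ≤ ‖A - B‖ * ‖p‖ ^ 2 :=
  calc ⟪A p, p⟫ - ⟪B p, p⟫ = ⟪(A - B) p, p⟫ := by rw [sub_apply, inner_sub_left]
    _ ≤ ‖(A - B) p‖ * ‖p‖ := real_inner_le_norm _ _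
    _ ≤ ‖A - B‖ * ‖p‖ * ‖p‖ := by gcongr; exact (A - B).le_opNorm p
    _ = ‖A - B‖ * ‖p‖ ^ 2 := by ring

theorem apply_add_le_cubic_model [CompleteSpace E] {f : E → ℝ} {gradf : E → E}
    {hessf : E → E →L[ℝ] E} {L : ℝ} (hgrad : ∀ x, HasGradientAt f (gradf x) x)
    (hhess : ∀ x, HasFDerivAt gradf (hessf x) x)
    (hlip : ∀ x y, ‖hessf x - hessf y‖ ≤ L * ‖x - y‖) (x p : E) :
    f (x + p) ≤ f x + ⟪gradf x, p⟫ + ⟪hessf x p, p⟫ / 2 + L / 6 * ‖p‖ ^ 3 := by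
  have hline : ∀ t : ℝ, HasDerivAt (fun t : ℝ => x + t • p) p t := fun t => by
    simpa using ((hasDerivAt_id t).smul_const p).const_add x
  have hdf : ∀ t : ℝ, HasDerivAt (fun t => f (x + t • p)) ⟪gradf (x + t • p), p⟫ t := fun t => by
    simpa [Function.comp_def] using (hgrad _).hasFDerivAt.comp_hasDerivAt t (hline t)
  have hdgrad : ∀ t : ℝ, HasDerivAt (fun t => ⟪gradf (x + t • p), p⟫)
      ⟪hessf (x + t • p) p, p⟫ t := fun t => by
    simpa [Function.comp_def] using
      ((hhess _).comp_hasDerivAt t (hline t)).inner ℝ (hasDerivAt_const t p)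
  have hlip' : ∀ t : ℝ, 0 ≤ t →
      ⟪hessf (x + t • p) p, p⟫ ≤ ⟪hessf (x + (0 : ℝ) • p) p, p⟫ + L * ‖p‖ ^ 3 * t := by
    intro t ht
    have hdist : ‖(x + t • p) - x‖ = t * ‖p‖ := by
      rw [add_sub_cancel_left, norm_smul, Real.norm_of_nonneg ht]
    have hvar := (inner_apply_sub_inner_apply_le (hessf (x + t • p)) (hessf x) p).trans
      (mul_le_mul_of_nonneg_right (hlip (x + t • p) x) (by positivity))
    rw [hdist] at hvar
    rw [zero_smul, add_zero]
    linarith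
  have htaylor := taylor_cubic_upper_bound hdf hdgrad hlip' zero_le_one
  simp only [zero_smul, one_smul, add_zero, mul_one, one_pow] at htaylor
  linarith

lemma norm_neg_inv_sqrt_norm_smul (g : E) : ‖-(√‖g‖)⁻¹ • g‖ = √‖g‖ := by
  rw [norm_smul, norm_neg, norm_inv, Real.norm_of_nonneg (Real.sqrt_nonneg _), inv_mul_eq_div,
    Real.div_sqrt]

lemma inner_neg_inv_sqrt_norm_smul (g : E) : ⟪g, -(√‖g‖)⁻¹ • g⟫ = -√‖g‖ ^ 3 := by
  rw [real_inner_smul_right, real_inner_self_eq_norm_sq, neg_mul, pow_two, ← mul_assoc,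
    inv_mul_eq_div, Real.div_sqrt]
  linear_combination √‖g‖ * Real.sq_sqrt (norm_nonneg g)

lemma inner_apply_neg_inv_sqrt_norm_smul_le (A : E →L[ℝ] E) (g : E) {c : ℝ}
    (h : |⟪g, A g⟫| / ‖g‖ ^ 2 ≤ c) :
    ⟪A (-(√‖g‖)⁻¹ • g), -(√‖g‖)⁻¹ • g⟫ ≤ c * √‖g‖ ^ 2 := by
  rw [Real.sq_sqrt (norm_nonneg g)]
  have hsq : (-(√‖g‖)⁻¹) * (-(√‖g‖)⁻¹) = ‖g‖⁻¹ := by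
    rw [neg_mul_neg, ← pow_two, inv_pow, Real.sq_sqrt (norm_nonneg g)]
  calc ⟪A (-(√‖g‖)⁻¹ • g), -(√‖g‖)⁻¹ • g⟫ = ⟪g, A g⟫ / ‖g‖ ^ 2 * ‖g‖ := by
        rw [map_smul, real_inner_smul_left, real_inner_smul_right, ← mul_assoc, hsq,
          real_inner_comm]
        rcases eq_or_ne ‖g‖ 0 with hg | hg
        · simp [hg]
        · field_simp
    _ ≤ |⟪g, A g⟫| / ‖g‖ ^ 2 * ‖g‖ := by gcongr; exact le_abs_self _
    _ ≤ c * ‖g‖ := by gcongr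

theorem apply_add_smul_lt_of_small_step [CompleteSpace E] {f : E → ℝ} {gradf : E → E}
    {hessf : E → E →L[ℝ] E} {L : ℝ} (hgrad : ∀ x, HasGradientAt f (gradf x) x)
    (hhess : ∀ x, HasFDerivAt gradf (hessf x) x)
    (hlip : ∀ x y, ‖hessf x - hessf y‖ ≤ L * ‖x - y‖) {x d : E} {c η α : ℝ}
    (hgd : ⟪gradf x, d⟫ = -‖d‖ ^ 3) (hHd : ⟪hessf x d, d⟫ ≤ c * ‖d‖ ^ 2) (hd : 0 < ‖d‖)
    (hα : 0 < α) (hαc : α * c < 5 / 3 * ‖d‖) (hαL : (L + η) * α ^ 2 ≤ 1) :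
    f (x + α • d) < f x - η / 6 * α ^ 3 * ‖d‖ ^ 3 := by
  have hmodel := apply_add_le_cubic_model hgrad hhess hlip x (α • d)
  rw [real_inner_smul_right, map_smul, real_inner_smul_left, real_inner_smul_right, norm_smul,
    Real.norm_of_nonneg hα.le, hgd] at hmodel
  have hquad : α * (α * ⟪hessf x d, d⟫) ≤ α * (α * (c * ‖d‖ ^ 2)) := by gcongr
  -- the curvature term costs less than `5/6` of the linear decrease `α ‖d‖³`, and
  -- `(L + η) α² ≤ 1` leaves the remaining `1/6` for the cubic term plus the `η`-margin
  have hsecond := mul_lt_mul_of_pos_left hαc (by positivity : 0 < α * ‖d‖ ^ 2 / 2)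
  have hthird := mul_le_mul_of_nonneg_right hαL (by positivity : 0 ≤ α * ‖d‖ ^ 3 / 6)
  linear_combination hmodel + hquad / 2 + hsecond + hthird

end InnerProductSpace

theorem exists_least_backtracking_index {θ ᾱ : ℝ} (hθ : θ ∈ Set.Ioo 0 1) (hᾱ : 0 < ᾱ)
    {P : ℕ → Prop} (hP : ∀ j, θ ^ j ≤ ᾱ → P j) :
    ∃ k, P k ∧ (∀ j, j < k → ¬ P j) ∧ (k : ℝ) ≤ max (Real.logb θ ᾱ) 0 + 1 ∧
      min 1 (θ * ᾱ) ≤ θ ^ k := by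
  classical
  obtain ⟨hθ0, hθ1⟩ := hθ
  set N := ⌈max (Real.logb θ ᾱ) 0⌉₊
  have hN : θ ^ N ≤ ᾱ := by
    rw [← Real.rpow_natCast, ← Real.logb_le_iff_le_rpow_of_base_lt_one hθ0 hθ1 hᾱ]
    exact (le_max_left _ _).trans (Nat.le_ceil _)
  have hex : ∃ j, P j := ⟨N, hP N hN⟩
  refine ⟨Nat.find hex, Nat.find_spec hex, fun j => Nat.find_min hex, ?_, ?_⟩
  · calc (Nat.find hex : ℝ) ≤ N := by exact_mod_cast Nat.find_le (hP N hN)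
      _ ≤ max (Real.logb θ ᾱ) 0 + 1 := (Nat.ceil_lt_add_one (le_max_right _ _)).le
  · rcases h : Nat.find hex with _ | j
    · simp
    · have hj : ᾱ < θ ^ j :=
        not_le.1 fun hj => Nat.find_min hex (h ▸ j.lt_succ_self) (hP j hj)
      calc min 1 (θ * ᾱ) ≤ θ * ᾱ := min_le_right _ _
        _ ≤ θ * θ ^ j := by gcongr
        _ = θ ^ (j + 1) := (pow_succ' θ j).symm

noncomputable def stepThreshold (L η ε_g ε_H : ℝ) : ℝ :=
  min (5 / 3) (√(L + η))⁻¹ * min (√ε_g / ε_H) 1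

section StepThreshold

variable {L η ε_g ε_H α : ℝ}

lemma stepThreshold_pos (hLη : 0 < L + η) (hεg : 0 < ε_g) (hεH : 0 < ε_H) :
    0 < stepThreshold L η ε_g ε_H := by
  unfold stepThreshold; positivity

lemma mul_le_of_le_stepThreshold (hεH : 0 < ε_H) (hα : α ≤ stepThreshold L η ε_g ε_H) :
    α * ε_H ≤ 5 / 3 * √ε_g := by
  have hα' : α ≤ 5 / 3 * (√ε_g / ε_H) :=
    hα.trans (mul_le_mul (min_le_left _ _) (min_le_left _ _) (by positivity) (by norm_num))
  calc α * ε_H ≤ 5 / 3 * (√ε_g / ε_H) * ε_H := by gcongr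
    _ = 5 / 3 * √ε_g := by field_simp

lemma mul_sq_le_one_of_le_stepThreshold (hLη : 0 < L + η) (hεH : 0 < ε_H) (hα0 : 0 ≤ α)
    (hα : α ≤ stepThreshold L η ε_g ε_H) : (L + η) * α ^ 2 ≤ 1 := by
  have hα' : α ≤ (√(L + η))⁻¹ :=
    hα.trans ((mul_le_mul (min_le_right _ _) (min_le_right _ _) (by positivity)
      (by positivity)).trans_eq (mul_one _))
  calc (L + η) * α ^ 2 ≤ (L + η) * ((√(L + η))⁻¹) ^ 2 := by gcongr
    _ = 1 := by rw [inv_pow, Real.sq_sqrt hLη.le, mul_inv_cancel₀ hLη.ne']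

lemma decrease_constant_le_stepThreshold {θ q : ℝ} (hθ : 0 < θ) (hLη : 0 < L + η)
    (hεg : 0 < ε_g) (hεH : 0 < ε_H) (hq : √ε_g ≤ q) :
    min 1 (min (θ ^ 3 / (L + η) ^ ((3 : ℝ) / 2)) (125 * θ ^ 3 / 27)) *
        min (ε_g ^ 3 / ε_H ^ 3) (ε_g ^ ((3 : ℝ) / 2)) ≤
      (min 1 (θ * stepThreshold L η ε_g ε_H) * q) ^ 3 := by
  have h3 : Odd 3 := by decide
  set A := min (5 / 3) (√(L + η))⁻¹
  set B := min (√ε_g / ε_H) 1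
  have hB0 : 0 ≤ B := by positivity
  have hq0 : 0 ≤ q := (Real.sqrt_nonneg _).trans hq
  have hθA : min 1 (min (θ ^ 3 / (L + η) ^ ((3 : ℝ) / 2)) (125 * θ ^ 3 / 27)) =
      (min 1 (θ * A)) ^ 3 := by
    rw [h3.pow_min, mul_min_of_nonneg _ _ hθ.le, h3.pow_min, one_pow, min_comm (_ ^ 3),
      ← sqrt_pow_three_eq_rpow hLη.le]
    congr 2 <;> ring
  have hBq : min (ε_g ^ 3 / ε_H ^ 3) (ε_g ^ ((3 : ℝ) / 2)) ≤ (B * q) ^ 3 := by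
    rw [← sqrt_pow_three_eq_rpow hεg.le, ← div_pow, ← h3.pow_min]
    gcongr
    rw [min_mul_of_nonneg _ _ hq0, one_mul]
    refine min_le_min ?_ hq
    calc ε_g / ε_H = √ε_g / ε_H * √ε_g := by
          rw [div_mul_eq_mul_div, Real.mul_self_sqrt hεg.le]
      _ ≤ √ε_g / ε_H * q := by gcongr
  have hmin : min 1 (θ * A) * B ≤ min 1 (θ * stepThreshold L η ε_g ε_H) :=
    le_min (mul_le_one₀ (min_le_left _ _) hB0 (min_le_right _ _))
      (by rw [stepThreshold, ← mul_assoc]; gcongr; exact min_le_right _ _)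
  calc _ ≤ (min 1 (θ * A)) ^ 3 * (B * q) ^ 3 := by
        rw [hθA]; gcongr
    _ = (min 1 (θ * A) * B * q) ^ 3 := by ring
    _ ≤ _ := by gcongr

end StepThreshold

theorem gradient_step_linesearch_general
    {n : ℕ} (f : EuclideanSpace ℝ (Fin n) → ℝ)
    (gradf : EuclideanSpace ℝ (Fin n) → EuclideanSpace ℝ (Fin n))
    (hessf : EuclideanSpace ℝ (Fin n) → EuclideanSpace ℝ (Fin n) →L[ℝ] EuclideanSpace ℝ (Fin n))
    (hgrad : ∀ x, HasGradientAt f (gradf x) x)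
    (hhess : ∀ x, HasFDerivAt gradf (hessf x) x)
    (L_H : ℝ) (hLH : 0 < L_H)
    (hlip : ∀ x y, ‖hessf x - hessf y‖ ≤ L_H * ‖x - y‖)
    (θ η ε_g ε_H : ℝ) (hθ : θ ∈ Set.Ioo (0:ℝ) 1) (hη : 0 < η)
    (hεg : ε_g ∈ Set.Ioo (0:ℝ) 1) (hεH : ε_H ∈ Set.Ioo (0:ℝ) 1)
    (x : EuclideanSpace ℝ (Fin n)) (hgnorm : ‖gradf x‖ > ε_g)
    (hcurv : |⟪gradf x, hessf x (gradf x)⟫| / ‖gradf x‖^2 ≤ ε_H)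
    (d : EuclideanSpace ℝ (Fin n)) (hd : d = -(Real.sqrt ‖gradf x‖)⁻¹ • gradf x) :
    ∃ jk : ℕ,
      (f (x + θ^jk • d) < f x - η/6 * θ^(3*jk) * ‖d‖^3) ∧
      (∀ j : ℕ, j < jk → ¬ (f (x + θ^j • d) < f x - η/6 * θ^(3*j) * ‖d‖^3)) ∧
      (jk : ℝ) ≤ max (Real.logb θ
        (min (5/3) (Real.sqrt (L_H+η))⁻¹ * min (Real.sqrt ε_g / ε_H) 1)) 0 + 1 ∧
      f x - f (x + θ^jk • d) ≥
        η/6 * min 1 (min (θ^3/(L_H+η)^((3:ℝ)/2)) (125*θ^3/27)) *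
          min (ε_g^3/ε_H^3) (ε_g^((3:ℝ)/2)) := by
  have hLη : 0 < L_H + η := by linarith
  have hnorm_d : ‖d‖ = √‖gradf x‖ := hd ▸ norm_neg_inv_sqrt_norm_smul _
  have hsqrt_lt : √ε_g < ‖d‖ := hnorm_d ▸ Real.sqrt_lt_sqrt hεg.1.le hgnorm
  have hgd : ⟪gradf x, d⟫ = -‖d‖ ^ 3 := by rw [hnorm_d, hd, inner_neg_inv_sqrt_norm_smul]
  have hHd : ⟪hessf x d, d⟫ ≤ ε_H * ‖d‖ ^ 2 := by
    rw [hnorm_d, hd]; exact inner_apply_neg_inv_sqrt_norm_smul_le _ _ hcurv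
  have haccept : ∀ j : ℕ, θ ^ j ≤ stepThreshold L_H η ε_g ε_H →
      f (x + θ ^ j • d) < f x - η / 6 * θ ^ (3 * j) * ‖d‖ ^ 3 := fun j hj => by
    rw [pow_mul']
    exact apply_add_smul_lt_of_small_step hgrad hhess hlip hgd hHd
      ((Real.sqrt_nonneg _).trans_lt hsqrt_lt) (pow_pos hθ.1 j)
      ((mul_le_of_le_stepThreshold hεH.1 hj).trans_lt (by linarith))
      (mul_sq_le_one_of_le_stepThreshold hLη hεH.1 (pow_pos hθ.1 j).le hj)
  have hthr := stepThreshold_pos hLη hεg.1 hεH.1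
  obtain ⟨jk, hacc, hfirst, hjk, hstep⟩ := exists_least_backtracking_index hθ hthr haccept
  refine ⟨jk, hacc, hfirst, hjk, ?_⟩
  calc _ ≤ η / 6 * (min 1 (θ * stepThreshold L_H η ε_g ε_H) * ‖d‖) ^ 3 := by
        rw [mul_assoc]
        gcongr
        exact decrease_constant_le_stepThreshold hθ.1 hLη hεg.1 hεH.1 hsqrt_lt.le
    _ ≤ η / 6 * θ ^ (3 * jk) * ‖d‖ ^ 3 := by
        rw [pow_mul', mul_assoc, ← mul_pow]
        gcongr
        exact mul_nonneg (le_min zero_le_one (mul_pos hθ.1 hthr).le) (norm_nonneg d)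
    _ ≤ f x - f (x + θ ^ jk • d) := by linarith

/-- Lemma 2.2: line search along the scaled negative gradient direction. -/
theorem gradient_step_linesearch
    {n : ℕ} (f : EuclideanSpace ℝ (Fin n) → ℝ)
    (gradf : EuclideanSpace ℝ (Fin n) → EuclideanSpace ℝ (Fin n))
    (hessf : EuclideanSpace ℝ (Fin n) → EuclideanSpace ℝ (Fin n) →L[ℝ] EuclideanSpace ℝ (Fin n))
    (hf : ContDiff ℝ 2 f)
    (hgrad : ∀ x, HasGradientAt f (gradf x) x)
    (hhess : ∀ x, HasFDerivAt gradf (hessf x) x)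
    (L_H : ℝ) (hLH : 0 < L_H)
    (hlip : ∀ x y, ‖hessf x - hessf y‖ ≤ L_H * ‖x - y‖)
    (θ η ε_g ε_H : ℝ) (hθ : θ ∈ Set.Ioo (0:ℝ) 1) (hη : 0 < η)
    (hεg : ε_g ∈ Set.Ioo (0:ℝ) 1) (hεH : ε_H ∈ Set.Ioo (0:ℝ) 1)
    (x : EuclideanSpace ℝ (Fin n)) (hgnorm : ‖gradf x‖ > ε_g)
    (hcurv : |⟪gradf x, hessf x (gradf x)⟫| / ‖gradf x‖^2 ≤ ε_H)
    (d : EuclideanSpace ℝ (Fin n)) (hd : d = -(Real.sqrt ‖gradf x‖)⁻¹ • gradf x) :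
    ∃ jk : ℕ,
      (f (x + θ^jk • d) < f x - η/6 * θ^(3*jk) * ‖d‖^3) ∧
      (∀ j : ℕ, j < jk → ¬ (f (x + θ^j • d) < f x - η/6 * θ^(3*j) * ‖d‖^3)) ∧
      (jk : ℝ) ≤ max (Real.logb θ
        (min (5/3) (Real.sqrt (L_H+η))⁻¹ * min (Real.sqrt ε_g / ε_H) 1)) 0 + 1 ∧
      f x - f (x + θ^jk • d) ≥
        η/6 * min 1 (min (θ^3/(L_H+η)^((3:ℝ)/2)) (125*θ^3/27)) *
          min (ε_g^3/ε_H^3) (ε_g^((3:ℝ)/2)) :=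
  gradient_step_linesearch_general f gradf hessf hgrad hhess L_H hLH hlip θ η ε_g ε_H hθ hη hεg hεH
    x hgnorm hcurv d hd
end

section
/- (Lemma 2.3) Suppose ε_H ∈ (0,1), ⟨v, ∇²f(x) v⟩ ≥ ε_H ‖v‖² for all v ∈ ℝⁿ, ‖∇f(x)‖ ≤ U_g with U_g > 0, ∇f(x) ≠ 0, and let d solve ∇²f(x) d = -∇f(x) (the Newton direction). Then the smallest nonnegative integer j_k such that f(x + θ^{j_k} d) < f(x) - (η/6) θ^{3 j_k} ‖d‖³ exists and satisfies j_k ≤ [log_θ( √(3/(L_H+η)) · ε_H/√U_g )]_+ + 1, and moreover f(x) - f(x + θ^{j_k} d) ≥ (η/6)·min{(2/L_H)^{3/2}, (3θ/(L_H+η))³} · min{‖∇f(x + θ^{j_k} d)‖^{3/2}, ε_H³}. -/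
/-!
Along the Newton direction the curvature bound gives `⟪∇f(x), d⟫ = -⟪d, ∇²f(x) d⟫ ≤ -ε_H ‖d‖²`,
so the cubic Taylor model yields
`f(x + α d) ≤ f(x) - α (1 - α/2) ε_H ‖d‖² + (L_H/6) α³ ‖d‖³` for `α ∈ [0, 1]`.
Hence a step `α < 1` is accepted once `(L_H + η) α² ‖d‖ ≤ 3 ε_H`, which holds for
`α = θ^j` as soon as `θ^j ≤ √(3/(L_H+η)) ε_H / √U_g` (using `ε_H ‖d‖ ≤ ‖∇f(x)‖ ≤ U_g`);
this bounds the first accepted index. Conversely a rejected step `α` satisfies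
`3 ε_H ≤ (L_H + η) α ‖d‖`. For the decrease: if the unit step is accepted, the gradient Taylor
bound `‖∇f(x + d)‖ ≤ (L_H/2) ‖d‖²` converts `‖d‖³` into `‖∇f(x + d)‖^{3/2}`; otherwise the
previous, rejected, step bounds `θ^{j_k} ‖d‖` from below by `3 θ ε_H / (L_H + η)`.
-/

open scoped RealInnerProductSpace

lemma norm_sub_le_div_of_norm_deriv_le_pow {E : Type*} [NormedAddCommGroup E] [NormedSpace ℝ E]
    {φ φ' : ℝ → E} (hφ : ∀ t, HasDerivAt φ (φ' t) t) {C : ℝ} {k : ℕ}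
    (bound : ∀ t ∈ Set.Icc (0:ℝ) 1, ‖φ' t‖ ≤ C * t ^ k) :
    ‖φ 1 - φ 0‖ ≤ C / (k + 1) := by
  have key : ∀ y ∈ Set.Icc (0:ℝ) 1, ‖φ y - φ 0‖ ≤ C / (k + 1) * y ^ (k + 1) := by
    apply image_norm_le_of_norm_deriv_right_le_deriv_boundary (f := fun t => φ t - φ 0)
      (f' := φ') (B := fun t => C / (k + 1) * t ^ (k + 1)) (B' := fun t => C * t ^ k)
    · exact (HasDerivAt.continuousOn fun s _ => hφ s).sub continuousOn_const
    · exact fun t _ => ((hφ t).sub_const (φ 0)).hasDerivWithinAt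
    · simp
    · intro t
      have hk : ((k:ℝ) + 1) ≠ 0 := by positivity
      refine ((hasDerivAt_pow (k + 1) t).const_mul (C / (k + 1))).congr_deriv ?_
      push_cast
      field_simp
    · exact fun t ht => bound t ⟨ht.1, ht.2.le⟩
  simpa using key 1 (by norm_num)

lemma norm_image_add_sub_sub_fderiv_le {E F : Type*} [NormedAddCommGroup E] [NormedSpace ℝ E]
    [NormedAddCommGroup F] [NormedSpace ℝ F] {g : E → F} {g' : E → E →L[ℝ] F}
    (hg : ∀ x, HasFDerivAt g (g' x) x) {L : ℝ} (hlip : ∀ x y, ‖g' x - g' y‖ ≤ L * ‖x - y‖)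
    (x p : E) :
    ‖g (x + p) - g x - g' x p‖ ≤ L / 2 * ‖p‖ ^ 2 := by
  have hline : ∀ t : ℝ, HasDerivAt (fun t : ℝ => x + t • p) p t := fun t => by
    simpa using ((hasDerivAt_id t).smul_const p).const_add x
  have hφ : ∀ t : ℝ, HasDerivAt (fun t : ℝ => g (x + t • p) - t • g' x p)
      (g' (x + t • p) p - g' x p) t := fun t =>
    ((hg (x + t • p)).comp_hasDerivAt t (hline t)).sub
      (by simpa using (hasDerivAt_id t).smul_const (g' x p))
  have key := norm_sub_le_div_of_norm_deriv_le_pow hφ (C := L * ‖p‖ ^ 2) (k := 1) fun t ht => by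
    calc ‖g' (x + t • p) p - g' x p‖ = ‖(g' (x + t • p) - g' x) p‖ := by simp
      _ ≤ ‖g' (x + t • p) - g' x‖ * ‖p‖ := (g' (x + t • p) - g' x).le_opNorm p
      _ ≤ L * ‖t • p‖ * ‖p‖ := by
          gcongr
          simpa using hlip (x + t • p) x
      _ = L * ‖p‖ ^ 2 * t ^ 1 := by
          rw [norm_smul, Real.norm_eq_abs, abs_of_nonneg ht.1]; ring
  convert key using 2
  · simp [sub_sub, add_comm]
  · push_cast; ring

lemma exists_pow_le_and_cast_le_logb_add_one {θ A : ℝ} (hθ0 : 0 < θ) (hθ1 : θ < 1)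
    (hA : 0 < A) : ∃ J : ℕ, 0 < J ∧ (J : ℝ) ≤ max (Real.logb θ A) 0 + 1 ∧ θ ^ J ≤ A := by
  set J := ⌊max (Real.logb θ A) 0⌋₊ + 1
  refine ⟨J, Nat.succ_pos _, ?_, ?_⟩
  · have := Nat.floor_le (le_max_right (Real.logb θ A) 0)
    push_cast [J]
    linarith
  · have hJ : Real.logb θ A ≤ J := by
      have := Nat.lt_floor_add_one (max (Real.logb θ A) 0)
      push_cast [J]
      linarith [le_max_left (Real.logb θ A) 0]
    calc θ ^ J = θ ^ (J : ℝ) := (Real.rpow_natCast θ J).symm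
      _ ≤ θ ^ Real.logb θ A := Real.rpow_le_rpow_of_exponent_ge hθ0 hθ1.le hJ
      _ = A := Real.rpow_logb hθ0 hθ1.ne hA

lemma mul_sq_mul_le_of_le_sqrt_div {c ε U D t : ℝ} (hc : 0 < c) (hε : 0 ≤ ε) (hU : 0 < U)
    (hD : 0 ≤ D) (hεD : ε * D ≤ U) (ht : 0 ≤ t) (hle : t ≤ √(3 / c) * ε / √U) :
    c * t ^ 2 * D ≤ 3 * ε := by
  have hsq : t ^ 2 ≤ 3 * ε ^ 2 / (c * U) := by
    calc t ^ 2 ≤ (√(3 / c) * ε / √U) ^ 2 := by gcongr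
      _ = 3 * ε ^ 2 / (c * U) := by
          rw [div_pow, mul_pow, Real.sq_sqrt (by positivity), Real.sq_sqrt hU.le]
          field_simp
  calc c * t ^ 2 * D ≤ c * (3 * ε ^ 2 / (c * U)) * D := by gcongr
    _ = 3 * ε * (ε * D) / U := by field_simp
    _ ≤ 3 * ε * U / U := by gcongr
    _ = 3 * ε := by field_simp

lemma rpow_three_halves_mul_le_pow_three {L a b : ℝ} (hL : 0 < L) (ha : 0 ≤ a) (hb : 0 ≤ b)
    (hab : a ≤ L / 2 * b ^ 2) : (2 / L) ^ (3 / 2 : ℝ) * a ^ (3 / 2 : ℝ) ≤ b ^ 3 := by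
  have h : 2 / L * a ≤ b ^ 2 := by
    rw [div_mul_eq_mul_div, div_le_iff₀ hL]
    linarith
  calc (2 / L) ^ (3 / 2 : ℝ) * a ^ (3 / 2 : ℝ) = (2 / L * a) ^ (3 / 2 : ℝ) :=
        (Real.mul_rpow (by positivity) ha).symm
    _ ≤ (b ^ 2) ^ (3 / 2 : ℝ) := by gcongr
    _ = b ^ 3 := by
        rw [← Real.rpow_natCast b 2, ← Real.rpow_mul hb, ← Real.rpow_natCast b 3]
        norm_num

lemma min_mul_min_le_mul_left {a b c d : ℝ} (ha : 0 ≤ a) (hc : 0 ≤ c) (hd : 0 ≤ d) :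
    min a b * min c d ≤ a * c :=
  mul_le_mul (min_le_left _ _) (min_le_left _ _) (le_min hc hd) ha

lemma min_mul_min_le_mul_right {a b c d : ℝ} (hb : 0 ≤ b) (hc : 0 ≤ c) (hd : 0 ≤ d) :
    min a b * min c d ≤ b * d :=
  mul_le_mul (min_le_right _ _) (min_le_right _ _) (le_min hc hd) hb

section InnerProductSpace

variable {E : Type*} [NormedAddCommGroup E] [InnerProductSpace ℝ E]

lemma image_add_le_quadratic_model_add_cube [CompleteSpace E] {f : E → ℝ} {gradf : E → E}
    {hessf : E → E →L[ℝ] E} (hgrad : ∀ x, HasGradientAt f (gradf x) x)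
    (hhess : ∀ x, HasFDerivAt gradf (hessf x) x) {L : ℝ}
    (hlip : ∀ x y, ‖hessf x - hessf y‖ ≤ L * ‖x - y‖) (x p : E) :
    f (x + p) ≤ f x + ⟪gradf x, p⟫ + 1 / 2 * ⟪p, hessf x p⟫ + L / 6 * ‖p‖ ^ 3 := by
  have hline : ∀ t : ℝ, HasDerivAt (fun t : ℝ => x + t • p) p t := fun t => by
    simpa using ((hasDerivAt_id t).smul_const p).const_add x
  set ψ : ℝ → ℝ := fun t => f (x + t • p) - t * ⟪gradf x, p⟫ - t ^ 2 / 2 * ⟪p, hessf x p⟫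
  have hψ : ∀ t : ℝ, HasDerivAt ψ ⟪gradf (x + t • p) - gradf x - t • hessf x p, p⟫ t := by
    intro t
    have hf : HasDerivAt (fun t : ℝ => f (x + t • p)) ⟪gradf (x + t • p), p⟫ t := by
      exact (hgrad (x + t • p)).hasFDerivAt.comp_hasDerivAt t (hline t)
    have hquad : HasDerivAt (fun t : ℝ => t ^ 2 / 2 * ⟪p, hessf x p⟫) (t * ⟪p, hessf x p⟫) t := by
      refine (((hasDerivAt_pow 2 t).div_const 2).mul_const ⟪p, hessf x p⟫).congr_deriv ?_
      push_cast; ring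
    refine ((hf.sub ((hasDerivAt_id t).mul_const ⟪gradf x, p⟫)).sub hquad).congr_deriv ?_
    simp only [inner_sub_left, real_inner_smul_left, real_inner_comm p (hessf x p), one_mul]
  have key := norm_sub_le_div_of_norm_deriv_le_pow hψ (C := L / 2 * ‖p‖ ^ 3) (k := 2)
    fun t ht => by
      have hrem := norm_image_add_sub_sub_fderiv_le hhess hlip x (t • p)
      rw [map_smul, norm_smul, Real.norm_eq_abs, abs_of_nonneg ht.1] at hrem
      calc ‖⟪gradf (x + t • p) - gradf x - t • hessf x p, p⟫‖
          ≤ ‖gradf (x + t • p) - gradf x - t • hessf x p‖ * ‖p‖ := norm_inner_le_norm _ _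
        _ ≤ L / 2 * (t * ‖p‖) ^ 2 * ‖p‖ := by gcongr
        _ = L / 2 * ‖p‖ ^ 3 * t ^ 2 := by ring
  have hval : ψ 1 - ψ 0 = f (x + p) - f x - ⟪gradf x, p⟫ - 1 / 2 * ⟪p, hessf x p⟫ := by
    simp only [ψ, one_smul, zero_smul, add_zero]; ring
  rw [hval, Real.norm_eq_abs] at key
  have := (abs_le.1 key).2
  norm_num at this
  linarith

/-- Acceptance test of the backtracking line search at step size `α`. -/
def CubicDecrease (f : E → ℝ) (η : ℝ) (x d : E) (α : ℝ) : Prop :=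
  f (x + α • d) < f x - η / 6 * α ^ 3 * ‖d‖ ^ 3

variable {f : E → ℝ} {gradf : E → E} {hessf : E → E →L[ℝ] E} {L ε η α : ℝ} {x d : E}

lemma mul_norm_le_norm_gradient_of_newton {H : E →L[ℝ] E} {g : E}
    (hcurv : ε * ‖d‖ ^ 2 ≤ ⟪d, H d⟫) (hnewton : H d = -g) : ε * ‖d‖ ≤ ‖g‖ := by
  have hcs : ε * ‖d‖ * ‖d‖ ≤ ‖g‖ * ‖d‖ := by
    calc ε * ‖d‖ * ‖d‖ = ε * ‖d‖ ^ 2 := by ring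
      _ ≤ ⟪d, -g⟫ := hnewton ▸ hcurv
      _ ≤ ‖d‖ * ‖-g‖ := real_inner_le_norm _ _
      _ = ‖g‖ * ‖d‖ := by rw [norm_neg, mul_comm]
  rcases (norm_nonneg d).eq_or_lt with hd | hd
  · simp [← hd]
  · exact le_of_mul_le_mul_right hcs hd

lemma norm_gradient_add_newton_le (hhess : ∀ x, HasFDerivAt gradf (hessf x) x)
    (hlip : ∀ x y, ‖hessf x - hessf y‖ ≤ L * ‖x - y‖) (hnewton : hessf x d = -gradf x) :
    ‖gradf (x + d)‖ ≤ L / 2 * ‖d‖ ^ 2 := by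
  simpa [sub_sub, hnewton] using norm_image_add_sub_sub_fderiv_le hhess hlip x d

lemma newton_ray_le [CompleteSpace E] (hgrad : ∀ x, HasGradientAt f (gradf x) x)
    (hhess : ∀ x, HasFDerivAt gradf (hessf x) x)
    (hlip : ∀ x y, ‖hessf x - hessf y‖ ≤ L * ‖x - y‖) (hnewton : hessf x d = -gradf x)
    (hcurv : ε * ‖d‖ ^ 2 ≤ ⟪d, hessf x d⟫) (hα0 : 0 ≤ α) (hα2 : α ≤ 2) :
    f (x + α • d) ≤ f x - α * (1 - α / 2) * (ε * ‖d‖ ^ 2) + L / 6 * α ^ 3 * ‖d‖ ^ 3 := by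
  have hT := image_add_le_quadratic_model_add_cube hgrad hhess hlip x (α • d)
  have hslope : ⟪gradf x, d⟫ = -⟪d, hessf x d⟫ := by
    rw [hnewton, inner_neg_right, neg_neg, real_inner_comm]
  rw [map_smul, real_inner_smul_left, real_inner_smul_right, real_inner_smul_right, hslope,
    norm_smul, Real.norm_eq_abs, abs_of_nonneg hα0] at hT
  have hα : 0 ≤ α * (1 - α / 2) := mul_nonneg hα0 (by linarith)
  nlinarith [mul_le_mul_of_nonneg_left hcurv hα]

lemma cubicDecrease_of_mul_sq_mul_norm_le [CompleteSpace E]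
    (hgrad : ∀ x, HasGradientAt f (gradf x) x) (hhess : ∀ x, HasFDerivAt gradf (hessf x) x)
    (hlip : ∀ x y, ‖hessf x - hessf y‖ ≤ L * ‖x - y‖) (hnewton : hessf x d = -gradf x)
    (hcurv : ε * ‖d‖ ^ 2 ≤ ⟪d, hessf x d⟫) (hε : 0 < ε) (hd : d ≠ 0) (hα0 : 0 < α)
    (hα1 : α < 1) (hstep : (L + η) * α ^ 2 * ‖d‖ ≤ 3 * ε) :
    CubicDecrease f η x d α := by
  have hray := newton_ray_le hgrad hhess hlip hnewton hcurv hα0.le (by linarith)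
  have hD := norm_pos_iff.2 hd
  have hgap : 0 < α * (1 - α) * (ε * ‖d‖ ^ 2) := by
    have := sub_pos.2 hα1
    positivity
  have hcube := mul_le_mul_of_nonneg_left hstep (by positivity : 0 ≤ α * ‖d‖ ^ 2 / 6)
  unfold CubicDecrease
  nlinarith

lemma three_mul_le_of_not_cubicDecrease [CompleteSpace E]
    (hgrad : ∀ x, HasGradientAt f (gradf x) x) (hhess : ∀ x, HasFDerivAt gradf (hessf x) x)
    (hlip : ∀ x y, ‖hessf x - hessf y‖ ≤ L * ‖x - y‖) (hnewton : hessf x d = -gradf x)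
    (hcurv : ε * ‖d‖ ^ 2 ≤ ⟪d, hessf x d⟫) (hε : 0 < ε) (hd : d ≠ 0) (hα0 : 0 < α)
    (hα1 : α ≤ 1) (hrej : ¬ CubicDecrease f η x d α) :
    3 * ε ≤ (L + η) * α * ‖d‖ := by
  unfold CubicDecrease at hrej
  have hray := newton_ray_le hgrad hhess hlip hnewton hcurv hα0.le (by linarith)
  have hD := norm_pos_iff.2 hd
  -- the two bounds on `f (x + α • d)`, divided by `α ‖d‖² / 6 > 0`
  have hsq : 3 * ε ≤ (L + η) * α ^ 2 * ‖d‖ := by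
    have hslack : 0 ≤ α * (1 - α) * (ε * ‖d‖ ^ 2) := by
      have := sub_nonneg.2 hα1
      positivity
    refine le_of_mul_le_mul_left ?_ (by positivity : 0 < α * ‖d‖ ^ 2 / 6)
    nlinarith
  calc 3 * ε ≤ (L + η) * α ^ 2 * ‖d‖ := hsq
    _ ≤ (L + η) * α * ‖d‖ := by
        have : 0 ≤ L + η := by nlinarith [mul_pos (pow_pos hα0 2) hD]
        gcongr
        nlinarith

lemma le_sub_of_first_cubicDecrease [CompleteSpace E] {θ : ℝ} {k : ℕ}
    (hgrad : ∀ x, HasGradientAt f (gradf x) x) (hhess : ∀ x, HasFDerivAt gradf (hessf x) x)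
    (hlip : ∀ x y, ‖hessf x - hessf y‖ ≤ L * ‖x - y‖) (hnewton : hessf x d = -gradf x)
    (hcurv : ε * ‖d‖ ^ 2 ≤ ⟪d, hessf x d⟫) (hε : 0 < ε) (hd : d ≠ 0) (hL : 0 < L) (hη : 0 < η)
    (hθ0 : 0 < θ) (hθ1 : θ < 1) (hk : CubicDecrease f η x d (θ ^ k))
    (hfirst : ∀ j < k, ¬ CubicDecrease f η x d (θ ^ j)) :
    η / 6 * min ((2 / L) ^ (3 / 2 : ℝ)) ((3 * θ / (L + η)) ^ 3) *
        min (‖gradf (x + θ ^ k • d)‖ ^ (3 / 2 : ℝ)) (ε ^ 3) ≤ f x - f (x + θ ^ k • d) := by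
  suffices hmin : min ((2 / L) ^ (3 / 2 : ℝ)) ((3 * θ / (L + η)) ^ 3) *
      min (‖gradf (x + θ ^ k • d)‖ ^ (3 / 2 : ℝ)) (ε ^ 3) ≤ (θ ^ k) ^ 3 * ‖d‖ ^ 3 by
    unfold CubicDecrease at hk
    rw [mul_assoc]
    nlinarith [mul_le_mul_of_nonneg_left hmin (by positivity : 0 ≤ η / 6)]
  rcases k with _ | m
  · simp only [pow_zero, one_smul, one_pow, one_mul]
    exact (min_mul_min_le_mul_left (by positivity) (by positivity) (by positivity)).trans
      (rpow_three_halves_mul_le_pow_three hL (norm_nonneg _) (norm_nonneg _)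
        (norm_gradient_add_newton_le hhess hlip hnewton))
  · have hrej := three_mul_le_of_not_cubicDecrease hgrad hhess hlip hnewton hcurv hε hd
      (pow_pos hθ0 m) (pow_le_one₀ hθ0.le hθ1.le) (hfirst m m.lt_succ_self)
    refine (min_mul_min_le_mul_right (by positivity) (by positivity) (by positivity)).trans ?_
    calc (3 * θ / (L + η)) ^ 3 * ε ^ 3 = (θ * (3 * ε / (L + η))) ^ 3 := by ring
      _ ≤ (θ * (θ ^ m * ‖d‖)) ^ 3 := by
          gcongr
          rw [div_le_iff₀ (by positivity)]
          linarith
      _ = (θ ^ (m + 1)) ^ 3 * ‖d‖ ^ 3 := by ring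

end InnerProductSpace

theorem newton_step_linesearch_general
    {n : ℕ} (f : EuclideanSpace ℝ (Fin n) → ℝ)
    (gradf : EuclideanSpace ℝ (Fin n) → EuclideanSpace ℝ (Fin n))
    (hessf : EuclideanSpace ℝ (Fin n) → EuclideanSpace ℝ (Fin n) →L[ℝ] EuclideanSpace ℝ (Fin n))
    (hgrad : ∀ x, HasGradientAt f (gradf x) x)
    (hhess : ∀ x, HasFDerivAt gradf (hessf x) x)
    (L_H : ℝ) (hLH : 0 < L_H)
    (hlip : ∀ x y, ‖hessf x - hessf y‖ ≤ L_H * ‖x - y‖)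
    (θ η ε_H U_g : ℝ) (hθ : θ ∈ Set.Ioo (0:ℝ) 1) (hη : 0 < η)
    (hεH : ε_H ∈ Set.Ioo (0:ℝ) 1)
    (x d : EuclideanSpace ℝ (Fin n))
    (hpd : ∀ v : EuclideanSpace ℝ (Fin n), ε_H * ‖v‖^2 ≤ ⟪v, hessf x v⟫)
    (hgb : ‖gradf x‖ ≤ U_g) (hgne : gradf x ≠ 0)
    (hnewton : hessf x d = -gradf x) :
    ∃ jk : ℕ,
      (f (x + θ^jk • d) < f x - η/6 * θ^(3*jk) * ‖d‖^3) ∧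
      (∀ j : ℕ, j < jk → ¬ (f (x + θ^j • d) < f x - η/6 * θ^(3*j) * ‖d‖^3)) ∧
      (jk : ℝ) ≤ max (Real.logb θ (Real.sqrt (3/(L_H+η)) * ε_H / Real.sqrt U_g)) 0 + 1 ∧
      f x - f (x + θ^jk • d) ≥
        η/6 * min ((2/L_H)^((3:ℝ)/2)) ((3*θ/(L_H+η))^3) *
          min (‖gradf (x + θ^jk • d)‖^((3:ℝ)/2)) (ε_H^3) := by
  classical
  obtain ⟨hθ0, hθ1⟩ := hθ
  obtain ⟨hε0, -⟩ := hεH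
  have hd : d ≠ 0 := by
    rintro rfl
    exact hgne (by simpa using hnewton.symm)
  have hcurv := hpd d
  have hUg : 0 < U_g := (norm_pos_iff.2 hgne).trans_le hgb
  simp only [pow_mul']
  obtain ⟨J, hJ0, hJle, hθJ⟩ := exists_pow_le_and_cast_le_logb_add_one hθ0 hθ1
    (A := √(3 / (L_H + η)) * ε_H / √U_g) (by positivity)
  have hJ : CubicDecrease f η x d (θ ^ J) :=
    cubicDecrease_of_mul_sq_mul_norm_le hgrad hhess hlip hnewton hcurv hε0 hd (by positivity)
      (pow_lt_one₀ hθ0.le hθ1 hJ0.ne') <|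
      mul_sq_mul_le_of_le_sqrt_div (by positivity) hε0.le hUg (norm_nonneg d)
        ((mul_norm_le_norm_gradient_of_newton hcurv hnewton).trans hgb) (by positivity) hθJ
  have hex : ∃ j, CubicDecrease f η x d (θ ^ j) := ⟨J, hJ⟩
  refine ⟨Nat.find hex, Nat.find_spec hex, fun j hj => Nat.find_min hex hj,
    (Nat.cast_le.2 (Nat.find_le hJ)).trans hJle, ?_⟩
  exact le_sub_of_first_cubicDecrease hgrad hhess hlip hnewton hcurv hε0 hd hLH hη hθ0 hθ1
    (Nat.find_spec hex) fun j hj => Nat.find_min hex hj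

/-- Lemma 2.3: line search along the Newton direction. -/
theorem newton_step_linesearch
    {n : ℕ} (f : EuclideanSpace ℝ (Fin n) → ℝ)
    (gradf : EuclideanSpace ℝ (Fin n) → EuclideanSpace ℝ (Fin n))
    (hessf : EuclideanSpace ℝ (Fin n) → EuclideanSpace ℝ (Fin n) →L[ℝ] EuclideanSpace ℝ (Fin n))
    (hf : ContDiff ℝ 2 f)
    (hgrad : ∀ x, HasGradientAt f (gradf x) x)
    (hhess : ∀ x, HasFDerivAt gradf (hessf x) x)
    (L_H : ℝ) (hLH : 0 < L_H)
    (hlip : ∀ x y, ‖hessf x - hessf y‖ ≤ L_H * ‖x - y‖)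
    (θ η ε_H U_g : ℝ) (hθ : θ ∈ Set.Ioo (0:ℝ) 1) (hη : 0 < η)
    (hεH : ε_H ∈ Set.Ioo (0:ℝ) 1) (hUg : 0 < U_g)
    (x d : EuclideanSpace ℝ (Fin n))
    (hpd : ∀ v : EuclideanSpace ℝ (Fin n), ε_H * ‖v‖^2 ≤ ⟪v, hessf x v⟫)
    (hgb : ‖gradf x‖ ≤ U_g) (hgne : gradf x ≠ 0)
    (hnewton : hessf x d = -gradf x) :
    ∃ jk : ℕ,
      (f (x + θ^jk • d) < f x - η/6 * θ^(3*jk) * ‖d‖^3) ∧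
      (∀ j : ℕ, j < jk → ¬ (f (x + θ^j • d) < f x - η/6 * θ^(3*j) * ‖d‖^3)) ∧
      (jk : ℝ) ≤ max (Real.logb θ (Real.sqrt (3/(L_H+η)) * ε_H / Real.sqrt U_g)) 0 + 1 ∧
      f x - f (x + θ^jk • d) ≥
        η/6 * min ((2/L_H)^((3:ℝ)/2)) ((3*θ/(L_H+η))^3) *
          min (‖gradf (x + θ^jk • d)‖^((3:ℝ)/2)) (ε_H^3) :=
  newton_step_linesearch_general f gradf hessf hgrad hhess L_H hLH hlip θ η ε_H U_g hθ hη hεH x d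
    hpd hgb hgne hnewton
end

section
/- (Lemma A.1) For any positive real scalars a and b and any real t ≥ 0, we have -a + √(a² + b t) ≥ (-a + √(a² + b)) · min(t, 1). -/
/-- Lemma A.1. -/
theorem sqrt_min_bound (a b t : ℝ) (ha : 0 < a) (hb : 0 < b) (ht : 0 ≤ t) :
    (-a + Real.sqrt (a^2 + b)) * min t 1 ≤ -a + Real.sqrt (a^2 + b*t) := by
  set s1 := Real.sqrt (a^2 + b) with hs1def
  set st := Real.sqrt (a^2 + b*t) with hstdef
  have hs1sq : s1^2 = a^2 + b := Real.sq_sqrt (by positivity)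
  have hstsq : st^2 = a^2 + b*t := Real.sq_sqrt (by positivity)
  have hs1 : 0 ≤ s1 := Real.sqrt_nonneg _
  have hst : 0 ≤ st := Real.sqrt_nonneg _
  have hsta : a ≤ st := by nlinarith
  have hs1a : a ≤ s1 := by nlinarith
  rcases le_total t 1 with h | h
  · rw [min_eq_left h]
    have hle : st ≤ s1 := Real.sqrt_le_sqrt (by nlinarith)
    have key : (-a + s1) * t * (a + s1) = (-a + st) * (a + st) := by
      linear_combination t * hs1sq - hstsq
    have h2 : (-a + s1) * t * (a + st) ≤ (-a + st) * (a + st) := by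
      rw [← key]
      apply mul_le_mul_of_nonneg_left (by linarith)
      have : 0 ≤ -a + s1 := by linarith
      positivity
    exact le_of_mul_le_mul_right h2 (by linarith)
  · rw [min_eq_right h]
    have hle : s1 ≤ st := Real.sqrt_le_sqrt (by nlinarith)
    linarith
end

section
/- (Unit regularized-Newton step bounds, used in Lemma 2.4) Let f : ℝⁿ → ℝ be twice continuously differentiable with ∇²f Lipschitz continuous with constant L_H > 0, and let ε_H > 0. If d solves (∇²f(x) + 2ε_H I) d = -∇f(x), then ‖∇f(x + d)‖ ≤ (L_H/2) ‖d‖² + 2ε_H ‖d‖, and consequently ‖d‖ ≥ (1/(1 + √(1 + L_H/2))) · min( ‖∇f(x + d)‖/ε_H, ε_H ). -/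
/-!
The map `t ↦ ∇f(x + t d) - ∇f(x) - t ∇²f(x) d` vanishes at `0` and has derivative of norm at most
`L_H t ‖d‖²`, so its value at `1` is at most `L_H/2 ‖d‖²`. The step equation rewrites `∇f(x + d)` as
this value minus `2ε_H d`, which gives the first bound. For the second, with `c = 1 + √(1 + L_H/2)`
one has `L_H/2 = c (c - 2)`; so if `‖d‖ < ε_H / c` the first bound yields `‖∇f(x + d)‖ ≤ c ε_H ‖d‖`.
-/

open Set

section Taylor

variable {E F : Type*} [NormedAddCommGroup E] [NormedSpace ℝ E]
  [NormedAddCommGroup F] [NormedSpace ℝ F]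

theorem norm_sub_sub_fderiv_le_of_lipschitz_fderiv {g : E → F} {g' : E → E →L[ℝ] F} {L : ℝ}
    (hg : ∀ y, HasFDerivAt g (g' y) y) (hlip : ∀ y z, ‖g' y - g' z‖ ≤ L * ‖y - z‖) (x d : E) :
    ‖g (x + d) - g x - g' x d‖ ≤ L / 2 * ‖d‖ ^ 2 := by
  have hpath : ∀ t : ℝ, HasDerivAt (fun t : ℝ => x + t • d) d t := fun t => by
    simpa using ((hasDerivAt_id t).smul_const d).const_add x
  have hremainder : ∀ t : ℝ, HasDerivAt (fun t : ℝ => g (x + t • d) - g x - t • g' x d)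
      (g' (x + t • d) d - g' x d) t := fun t => by
    simpa using (((hg _).comp_hasDerivAt t (hpath t)).sub_const (g x)).fun_sub
      ((hasDerivAt_id t).smul_const (g' x d))
  have hbound : ∀ t : ℝ, HasDerivAt (fun t : ℝ => L / 2 * t ^ 2 * ‖d‖ ^ 2) (L * t * ‖d‖ ^ 2) t :=
    fun t => (((hasDerivAt_pow 2 t).const_mul (L / 2)).mul_const (‖d‖ ^ 2)).congr_deriv (by ring)
  have hderiv_le : ∀ t ∈ Ico (0 : ℝ) 1, ‖g' (x + t • d) d - g' x d‖ ≤ L * t * ‖d‖ ^ 2 := by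
    rintro t ⟨ht, -⟩
    calc ‖g' (x + t • d) d - g' x d‖ = ‖(g' (x + t • d) - g' x) d‖ := rfl
      _ ≤ ‖g' (x + t • d) - g' x‖ * ‖d‖ := ContinuousLinearMap.le_opNorm _ _
      _ ≤ L * ‖x + t • d - x‖ * ‖d‖ := by gcongr; exact hlip _ _
      _ = L * t * ‖d‖ ^ 2 := by
        rw [add_sub_cancel_left, norm_smul, Real.norm_of_nonneg ht]; ring
  simpa using image_norm_le_of_norm_deriv_right_le_deriv_boundary (a := 0) (b := 1)
    (fun t _ => (hremainder t).continuousAt.continuousWithinAt)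
    (fun t _ => (hremainder t).hasDerivWithinAt) (by simp) hbound hderiv_le
    (right_mem_Icc.2 zero_le_one)

theorem norm_le_of_regularized_newton_step {g : E → E} {g' : E → E →L[ℝ] E} {L σ : ℝ}
    (hg : ∀ y, HasFDerivAt g (g' y) y) (hlip : ∀ y z, ‖g' y - g' z‖ ≤ L * ‖y - z‖)
    (hσ : 0 ≤ σ) {x d : E} (hstep : g' x d + σ • d = -g x) :
    ‖g (x + d)‖ ≤ L / 2 * ‖d‖ ^ 2 + σ * ‖d‖ := by
  have hresidual : g (x + d) = (g (x + d) - g x - g' x d) - σ • d := by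
    linear_combination (norm := module) hstep
  calc ‖g (x + d)‖ = ‖(g (x + d) - g x - g' x d) - σ • d‖ := congrArg norm hresidual
    _ ≤ ‖g (x + d) - g x - g' x d‖ + ‖σ • d‖ := norm_sub_le _ _
    _ ≤ L / 2 * ‖d‖ ^ 2 + σ * ‖d‖ := by
        rw [norm_smul, Real.norm_of_nonneg hσ]
        gcongr
        exact norm_sub_sub_fderiv_le_of_lipschitz_fderiv hg hlip x d

end Taylor

theorem inv_one_add_sqrt_mul_min_le_of_le_quadratic {L ε r G : ℝ} (hL : 0 ≤ L) (hε : 0 < ε)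
    (hr : 0 ≤ r) (hG : G ≤ L / 2 * r ^ 2 + 2 * ε * r) :
    1 / (1 + √(1 + L / 2)) * min (G / ε) ε ≤ r := by
  set c := 1 + √(1 + L / 2)
  have hc2 : 2 ≤ c := by
    have : 1 ≤ √(1 + L / 2) := Real.one_le_sqrt.2 (by linarith)
    linarith
  have hLc : L / 2 = c * (c - 2) := by
    have := Real.sq_sqrt (show 0 ≤ 1 + L / 2 by linarith)
    simp only [c]; nlinarith
  rw [one_div, inv_mul_le_iff₀ (by linarith)]
  rcases le_or_gt ε (c * r) with hbig | hsmall
  · exact min_le_of_right_le hbig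
  · refine min_le_of_left_le ((div_le_iff₀ hε).2 ?_)
    calc G ≤ (c - 2) * (c * r) * r + 2 * ε * r := by rw [hLc] at hG; linarith
      _ ≤ (c - 2) * ε * r + 2 * ε * r := by gcongr
      _ = c * r * ε := by ring

theorem unit_regularized_newton_bounds_general
    {n : ℕ}
    (gradf : EuclideanSpace ℝ (Fin n) → EuclideanSpace ℝ (Fin n))
    (hessf : EuclideanSpace ℝ (Fin n) → EuclideanSpace ℝ (Fin n) →L[ℝ] EuclideanSpace ℝ (Fin n))
    (hhess : ∀ x, HasFDerivAt gradf (hessf x) x)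
    (L_H : ℝ) (hLH : 0 < L_H)
    (hlip : ∀ x y, ‖hessf x - hessf y‖ ≤ L_H * ‖x - y‖)
    (ε_H : ℝ) (hεH : 0 < ε_H)
    (x d : EuclideanSpace ℝ (Fin n))
    (hregnewton : hessf x d + (2*ε_H) • d = -gradf x) :
    ‖gradf (x + d)‖ ≤ L_H/2 * ‖d‖^2 + 2*ε_H*‖d‖ ∧
    (1/(1 + Real.sqrt (1 + L_H/2))) * min (‖gradf (x + d)‖ / ε_H) ε_H ≤ ‖d‖ := by
  have hgrad_le := norm_le_of_regularized_newton_step hhess hlip (by positivity) hregnewton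
  exact ⟨hgrad_le, inv_one_add_sqrt_mul_min_le_of_le_quadratic hLH.le hεH (norm_nonneg d) hgrad_le⟩

/-- unit regularized-Newton step bounds, used in Lemma 2.4. -/
theorem unit_regularized_newton_bounds
    {n : ℕ} (f : EuclideanSpace ℝ (Fin n) → ℝ)
    (gradf : EuclideanSpace ℝ (Fin n) → EuclideanSpace ℝ (Fin n))
    (hessf : EuclideanSpace ℝ (Fin n) → EuclideanSpace ℝ (Fin n) →L[ℝ] EuclideanSpace ℝ (Fin n))
    (hf : ContDiff ℝ 2 f)
    (hgrad : ∀ x, HasGradientAt f (gradf x) x)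
    (hhess : ∀ x, HasFDerivAt gradf (hessf x) x)
    (L_H : ℝ) (hLH : 0 < L_H)
    (hlip : ∀ x y, ‖hessf x - hessf y‖ ≤ L_H * ‖x - y‖)
    (ε_H : ℝ) (hεH : 0 < ε_H)
    (x d : EuclideanSpace ℝ (Fin n))
    (hregnewton : hessf x d + (2*ε_H) • d = -gradf x) :
    ‖gradf (x + d)‖ ≤ L_H/2 * ‖d‖^2 + 2*ε_H*‖d‖ ∧
    (1/(1 + Real.sqrt (1 + L_H/2))) * min (‖gradf (x + d)‖ / ε_H) ε_H ≤ ‖d‖ :=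
  unit_regularized_newton_bounds_general gradf hessf hhess L_H hLH hlip ε_H hεH x d hregnewton
end

section
/- (Inexact step norm upper bound, used in Lemmas 3.4 and 3.5) Let H be a real symmetric n×n matrix with ⟨v, H v⟩ ≥ ε_H ‖v‖² for all v, where ε_H > 0, let ζ ∈ (0,1), and let g, d, r be vectors with H d = -g + r, ⟨g, r⟩ = 0, and ‖r‖ ≤ (ζ/2)‖g‖. Then ‖d‖ ≤ (√(1 + ζ²/4)/ε_H) ‖g‖. -/
open scoped RealInnerProductSpace

/-- inexact step norm upper bound, used in Lemmas 3.4 and 3.5. -/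
theorem inexact_step_norm_upper_bound {n : ℕ}
    (H : EuclideanSpace ℝ (Fin n) →L[ℝ] EuclideanSpace ℝ (Fin n))
    (hsymm : ∀ v w : EuclideanSpace ℝ (Fin n), ⟪H v, w⟫ = ⟪v, H w⟫)
    (ε_H ζ : ℝ) (hεH : 0 < ε_H) (hζ : ζ ∈ Set.Ioo (0:ℝ) 1)
    (hpd : ∀ v : EuclideanSpace ℝ (Fin n), ε_H * ‖v‖^2 ≤ ⟪v, H v⟫)
    (g d r : EuclideanSpace ℝ (Fin n))
    (hd : H d = -g + r) (horth : ⟪g, r⟫ = 0) (hr : ‖r‖ ≤ ζ/2 * ‖g‖) :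
    ‖d‖ ≤ Real.sqrt (1 + ζ^2/4) / ε_H * ‖g‖ := by
  have hg : (0:ℝ) ≤ ‖g‖ := norm_nonneg _
  have hbound : ‖-g + r‖ ≤ Real.sqrt (1 + ζ^2/4) * ‖g‖ := by
    have h1 : ‖-g + r‖^2 = ‖g‖^2 + ‖r‖^2 := by
      have : -g + r = -(g - r) := by abel
      rw [this, norm_neg]
      rw [norm_sub_sq_real, horth]
      ring
    have h2 : ‖r‖^2 ≤ ζ^2/4 * ‖g‖^2 := by
      have := mul_self_le_mul_self (norm_nonneg r) hr
      nlinarith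
    have h3 : ‖-g + r‖^2 ≤ (1 + ζ^2/4) * ‖g‖^2 := by nlinarith
    have h4 : Real.sqrt (1 + ζ^2/4) * ‖g‖ = Real.sqrt ((1 + ζ^2/4) * ‖g‖^2) := by
      rw [Real.sqrt_mul (by positivity), Real.sqrt_sq hg]
    rw [h4]
    calc ‖-g + r‖ = Real.sqrt (‖-g + r‖^2) := by rw [Real.sqrt_sq (norm_nonneg _)]
      _ ≤ Real.sqrt ((1 + ζ^2/4) * ‖g‖^2) := Real.sqrt_le_sqrt h3
  have key : ε_H * ‖d‖^2 ≤ ‖d‖ * (Real.sqrt (1 + ζ^2/4) * ‖g‖) := by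
    calc ε_H * ‖d‖^2 ≤ ⟪d, H d⟫ := hpd d
      _ = ⟪d, -g + r⟫ := by rw [hd]
      _ ≤ ‖d‖ * ‖-g + r‖ := real_inner_le_norm _ _
      _ ≤ ‖d‖ * (Real.sqrt (1 + ζ^2/4) * ‖g‖) := by
          exact mul_le_mul_of_nonneg_left hbound (norm_nonneg d)
  rcases eq_or_lt_of_le (norm_nonneg d) with h0 | h0
  · rw [← h0]
    positivity
  · rw [div_mul_eq_mul_div, le_div_iff₀ hεH]
    nlinarith
end
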